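/- Let X be a compact metric space and M a metric space. A continuous map g : X → M is Krasinkiewicz if and only if for all positive integers m, n and every subcontinuum L ⊆ X with diam g(L) ≥ 1/n there exists x ∈ L such that C(x,g) ⊆ B(L, 1/m). -/
import Mathlib

open Set Metric Topology

section Aux

variable {Z : Type*} [TopologicalSpace Z]

/-- In a compact Hausdorff space, if the connected component of `x` is contained in an open
set `U`, there is a clopen set between them. -/
lemma aux_clopen_between [CompactSpace Z] [T2Space Z] (x : Z) {U : Set Z} (hU : IsOpen U)
    (h : connectedComponent x ⊆ U) :
    ∃ V : Set Z, IsClopen V ∧ connectedComponent x ⊆ V ∧ V ⊆ U := by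
  classical
  have hcc := connectedComponent_eq_iInter_isClopen x
  have hUc : IsCompact Uᶜ := hU.isClosed_compl.isCompact
  have hcover : Uᶜ ⊆ ⋃ s : { s : Set Z // IsClopen s ∧ x ∈ s }, (↑s)ᶜ := by
    intro z hz
    by_contra hzn
    simp only [mem_iUnion, mem_compl_iff, not_exists, not_not] at hzn
    have hzc : z ∈ connectedComponent x := by
      rw [hcc]; exact mem_iInter.2 fun s => hzn s
    exact hz (h hzc)
  obtain ⟨t, ht⟩ := hUc.elim_finite_subcover
    (fun s : { s : Set Z // IsClopen s ∧ x ∈ s } => (↑s : Set Z)ᶜ)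
    (fun s => s.2.1.compl.isOpen) hcover
  refine ⟨⋂ s ∈ t, ↑s, isClopen_biInter_finset (fun s _ => s.2.1), ?_, ?_⟩
  · intro z hz
    rw [hcc] at hz
    exact mem_iInter₂.2 fun s _ => (mem_iInter.1 hz) s
  · intro z hz
    by_contra hzU
    have := ht hzU
    simp only [mem_iUnion, mem_compl_iff] at this
    obtain ⟨s, hst, hzs⟩ := this
    exact hzs (mem_iInter₂.1 hz s hst)

variable {N : Type*} [TopologicalSpace N]

/-- Separation lemma: given a continuous map `f` on a compact Hausdorff space and an open set `U`
containing the connected component of `x` in its fiber, we find an open `W` squeezed in between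
together with an open set `V ∋ f x` whose preimage is contained in `W ∪ (closure W)ᶜ`. -/
lemma aux_sep [CompactSpace Z] [T2Space Z] [T2Space N] {f : Z → N} (hf : Continuous f)
    (x : Z) {U : Set Z} (hU : IsOpen U)
    (hx : connectedComponentIn (f ⁻¹' {f x}) x ⊆ U) :
    ∃ (W : Set Z) (V : Set N), IsOpen W ∧ IsOpen V ∧
      connectedComponentIn (f ⁻¹' {f x}) x ⊆ W ∧ W ⊆ U ∧ f x ∈ V ∧
      f ⁻¹' V ⊆ W ∪ (closure W)ᶜ := by
  have hxF : x ∈ f ⁻¹' {f x} := rfl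
  have hFcl : IsClosed (f ⁻¹' {f x}) := isClosed_singleton.preimage hf
  haveI : CompactSpace (f ⁻¹' {f x}) := isCompact_iff_compactSpace.mp hFcl.isCompact
  have himg : connectedComponentIn (f ⁻¹' {f x}) x
      = (↑) '' connectedComponent (⟨x, hxF⟩ : f ⁻¹' {f x}) :=
    connectedComponentIn_eq_image hxF
  have hcompsub : connectedComponent (⟨x, hxF⟩ : f ⁻¹' {f x}) ⊆ (↑) ⁻¹' U := by
    intro z hz
    exact hx (himg ▸ mem_image_of_mem _ hz)
  obtain ⟨Vc, hVc, hVcsub, hVcU⟩ := aux_clopen_between (⟨x, hxF⟩ : f ⁻¹' {f x})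
    (hU.preimage continuous_subtype_val) hcompsub
  have hval : IsClosedEmbedding ((↑) : (f ⁻¹' {f x}) → Z) := hFcl.isClosedEmbedding_subtypeVal
  have hZ1cl : IsClosed ((↑) '' Vc : Set Z) := hval.isClosedMap _ hVc.isClosed
  have hZ2cl : IsClosed ((↑) '' Vcᶜ : Set Z) := hval.isClosedMap _ hVc.compl.isClosed
  have hZ1U : ((↑) '' Vc : Set Z) ⊆ U := by rintro _ ⟨z, hz, rfl⟩; exact hVcU hz
  have hZ12 : ∀ w : Z, w ∈ ((↑) '' Vc : Set Z) → w ∉ ((↑) '' Vcᶜ : Set Z) := by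
    rintro w ⟨z1, h1, rfl⟩ ⟨z2, h2, he⟩
    exact h2 (by rw [show z2 = z1 from Subtype.coe_injective he]; exact h1)
  obtain ⟨W, hWo, hZ1W, hclW⟩ := normal_exists_closure_subset hZ1cl
    (hU.inter hZ2cl.isOpen_compl)
    (subset_inter hZ1U (fun z hz => hZ12 z hz))
  have hWU : W ⊆ U := fun z hz => (hclW (subset_closure hz)).1
  have hFO : (f ⁻¹' {f x}) ⊆ W ∪ (closure W)ᶜ := by
    intro z hz
    by_cases hzV : (⟨z, hz⟩ : f ⁻¹' {f x}) ∈ Vc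
    · exact Or.inl (hZ1W ⟨⟨z, hz⟩, hzV, rfl⟩)
    · refine Or.inr fun hcl => ?_
      exact (hclW hcl).2 ⟨⟨z, hz⟩, hzV, rfl⟩
  refine ⟨W, (f '' (W ∪ (closure W)ᶜ)ᶜ)ᶜ, hWo, ?_, ?_, hWU, ?_, ?_⟩
  · have hcpt : IsCompact (W ∪ (closure W)ᶜ)ᶜ :=
      (hWo.union isClosed_closure.isOpen_compl).isClosed_compl.isCompact
    exact (hcpt.image hf).isClosed.isOpen_compl
  · rw [himg]
    rintro _ ⟨z, hz, rfl⟩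
    exact hZ1W ⟨z, hVcsub hz, rfl⟩
  · rintro ⟨z, hz, hzf⟩
    exact hz (hFO (show z ∈ f ⁻¹' {f x} from hzf))
  · intro z hz
    by_contra hzO
    exact hz ⟨z, hzO, rfl⟩

/-- Upper semicontinuity of components of fibers: the set of points whose fiber-component is
contained in a fixed open set is open. -/
lemma aux_usc [CompactSpace Z] [T2Space Z] [T2Space N] {f : Z → N} (hf : Continuous f)
    {U : Set Z} (hU : IsOpen U) :
    IsOpen { x : Z | connectedComponentIn (f ⁻¹' {f x}) x ⊆ U } := by
  rw [isOpen_iff_mem_nhds]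
  intro x hx
  obtain ⟨W, V, hWo, hVo, hcW, hWU, hfxV, hpre⟩ := aux_sep hf x hU hx
  have hN : IsOpen (W ∩ f ⁻¹' V) := hWo.inter (hVo.preimage hf)
  have hxN : x ∈ W ∩ f ⁻¹' V := ⟨hcW (mem_connectedComponentIn rfl), hfxV⟩
  refine Filter.mem_of_superset (hN.mem_nhds hxN) ?_
  rintro y ⟨hyW, hyV⟩
  have h1 : connectedComponentIn (f ⁻¹' {f y}) y ⊆ W ∪ (closure W)ᶜ := by
    intro z hz
    have hfz : f z = f y := connectedComponentIn_subset (f ⁻¹' {f y}) y hz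
    exact hpre (show f z ∈ V by rw [hfz]; exact hyV)
  have h2 : connectedComponentIn (f ⁻¹' {f y}) y ⊆ W :=
    IsPreconnected.subset_left_of_subset_union hWo isClosed_closure.isOpen_compl
      (disjoint_compl_right.mono_left subset_closure) h1
      ⟨y, mem_connectedComponentIn rfl, hyW⟩
      isPreconnected_connectedComponentIn
  exact h2.trans hWU

lemma aux_isClosed_connectedComponentIn {F : Set Z} (hF : IsClosed F) {x : Z} :
    IsClosed (connectedComponentIn F x) := by
  by_cases hx : x ∈ F
  · rw [connectedComponentIn_eq_image hx]
    exact hF.isClosedEmbedding_subtypeVal.isClosedMap _ isClosed_connectedComponent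
  · rw [connectedComponentIn_eq_empty hx]
    exact isClosed_empty

/-- Preimage of a closed preconnected set under a "monotone" map (connected fibers) between
a compact space and a Hausdorff space is preconnected. -/
lemma aux_preimage_preconnected {A B : Type*} [TopologicalSpace A] [TopologicalSpace B]
    [CompactSpace A] [T2Space B] {q : A → B} (hq : Continuous q)
    (hsurj : Function.Surjective q) (hfib : ∀ b, IsPreconnected (q ⁻¹' {b}))
    {T : Set B} (hT : IsClosed T) (hTc : IsPreconnected T) :
    IsPreconnected (q ⁻¹' T) := by
  rw [isPreconnected_iff_subset_of_fully_disjoint_closed (hT.preimage hq)]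
  intro u v hu hv hcov hdisj
  have fiber_decomp : ∀ t ∈ T, q ⁻¹' {t} ⊆ u ∨ q ⁻¹' {t} ⊆ v := by
    intro t ht
    apply isPreconnected_iff_subset_of_disjoint_closed.1 (hfib t) u v hu hv
    · exact (preimage_mono (singleton_subset_iff.2 ht)).trans hcov
    · rw [hdisj.inter_eq, inter_empty]
  have himg_closed : ∀ w : Set A, IsClosed w → IsClosed (q '' (q ⁻¹' T ∩ w)) := fun w hw =>
    ((((hT.preimage hq).inter hw).isCompact).image hq).isClosed
  have hmem₁ : ∀ t, t ∈ T ∩ q '' (q ⁻¹' T ∩ u) ↔ t ∈ T ∧ q ⁻¹' {t} ⊆ u := by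
    intro t
    constructor
    · rintro ⟨ht, z, ⟨_, hzu⟩, rfl⟩
      refine ⟨ht, ?_⟩
      rcases fiber_decomp _ ht with h | h
      · exact h
      · exact absurd (h rfl) (Set.disjoint_left.1 hdisj hzu)
    · rintro ⟨ht, hsub⟩
      obtain ⟨z, hz⟩ := hsurj t
      exact ⟨ht, z, ⟨show z ∈ q ⁻¹' T by rw [mem_preimage, hz]; exact ht,
        hsub (show q z ∈ ({t} : Set B) from hz)⟩, hz⟩
  have hmem₂ : ∀ t, t ∈ T ∩ q '' (q ⁻¹' T ∩ v) ↔ t ∈ T ∧ q ⁻¹' {t} ⊆ v := by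
    intro t
    constructor
    · rintro ⟨ht, z, ⟨_, hzv⟩, rfl⟩
      refine ⟨ht, ?_⟩
      rcases fiber_decomp _ ht with h | h
      · exact absurd hzv (Set.disjoint_left.1 hdisj (h rfl))
      · exact h
    · rintro ⟨ht, hsub⟩
      obtain ⟨z, hz⟩ := hsurj t
      exact ⟨ht, z, ⟨show z ∈ q ⁻¹' T by rw [mem_preimage, hz]; exact ht,
        hsub (show q z ∈ ({t} : Set B) from hz)⟩, hz⟩
  have hcover' : T ⊆ (T ∩ q '' (q ⁻¹' T ∩ u)) ∪ (T ∩ q '' (q ⁻¹' T ∩ v)) := by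
    intro t ht
    rcases fiber_decomp t ht with h | h
    · exact Or.inl ((hmem₁ t).2 ⟨ht, h⟩)
    · exact Or.inr ((hmem₂ t).2 ⟨ht, h⟩)
  have hdisj' : Disjoint (T ∩ q '' (q ⁻¹' T ∩ u)) (T ∩ q '' (q ⁻¹' T ∩ v)) := by
    rw [Set.disjoint_left]
    intro t h1 h2
    obtain ⟨ht, hu'⟩ := (hmem₁ t).1 h1
    obtain ⟨_, hv'⟩ := (hmem₂ t).1 h2
    obtain ⟨z, hz⟩ := hsurj t
    exact Set.disjoint_left.1 hdisj (hu' (show q z ∈ ({t} : Set B) from hz))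
      (hv' (show q z ∈ ({t} : Set B) from hz))
  rcases (isPreconnected_iff_subset_of_fully_disjoint_closed hT).1 hTc _ _
      (hT.inter (himg_closed u hu)) (hT.inter (himg_closed v hv)) hcover' hdisj' with h | h
  · left
    intro z hz
    have := (hmem₁ (q z)).1 (h hz)
    exact this.2 rfl
  · right
    intro z hz
    have := (hmem₂ (q z)).1 (h hz)
    exact this.2 rfl

/-- Boundary bumping–type lemma: in a compact connected Hausdorff space the component of a point
of an open set `V ≠ univ` in `closure V` is not contained in `V`. -/
lemma aux_bump [CompactSpace Z] [T2Space Z] [ConnectedSpace Z] {V : Set Z} (hV : IsOpen V)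
    {y : Z} (hy : y ∈ V) (hproper : V ≠ univ) :
    ∃ p ∈ connectedComponentIn (closure V) y, p ∉ V := by
  by_contra hcon
  push_neg at hcon
  have hyc : y ∈ closure V := subset_closure hy
  haveI : CompactSpace (closure V) := isCompact_iff_compactSpace.mp isClosed_closure.isCompact
  have hsub : connectedComponent (⟨y, hyc⟩ : closure V) ⊆ (↑) ⁻¹' V := by
    intro z hz
    exact hcon z ((connectedComponentIn_eq_image hyc) ▸ mem_image_of_mem _ hz)
  obtain ⟨Vc, hVc, hVcsub, hVcV⟩ := aux_clopen_between (⟨y, hyc⟩ : closure V)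
    (hV.preimage continuous_subtype_val) hsub
  obtain ⟨O, hO, hOeq⟩ := isOpen_induced_iff.mp hVc.isOpen
  have hZ₁cl : IsClosed ((↑) '' Vc : Set Z) :=
    isClosed_closure.isClosedEmbedding_subtypeVal.isClosedMap _ hVc.isClosed
  have hZ₁V : ((↑) '' Vc : Set Z) ⊆ V := by rintro _ ⟨z, hz, rfl⟩; exact hVcV hz
  have hZ₁eq : ((↑) '' Vc : Set Z) = O ∩ V := by
    apply Subset.antisymm
    · rintro _ ⟨z, hz, rfl⟩
      refine ⟨?_, hVcV hz⟩
      rw [← hOeq] at hz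
      exact hz
    · rintro z ⟨hzO, hzV⟩
      refine ⟨⟨z, subset_closure hzV⟩, ?_, rfl⟩
      rw [← hOeq]
      exact hzO
  have hclopen : IsClopen ((↑) '' Vc : Set Z) := ⟨hZ₁cl, hZ₁eq ▸ hO.inter hV⟩
  rcases isClopen_iff.mp hclopen with h | h
  · have hyZ : y ∈ ((↑) '' Vc : Set Z) := ⟨⟨y, hyc⟩, hVcsub mem_connectedComponent, rfl⟩
    rw [h] at hyZ
    exact hyZ
  · obtain ⟨p, hp⟩ : ∃ p, p ∉ V := by
      by_contra h2
      push_neg at h2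
      exact hproper (eq_univ_of_forall h2)
    exact hp (hZ₁V (h ▸ mem_univ p))

end Aux

theorem stmt_2 {X M : Type*} [MetricSpace X] [CompactSpace X] [MetricSpace M]
    (g : X → M) (hg : Continuous g) :
    (∀ K : Set X, IsCompact K → IsConnected K →
        (g '' K).Subsingleton ∨ ∃ x ∈ K, connectedComponentIn (g ⁻¹' {g x}) x ⊆ K) ↔
      (∀ m n : ℕ, 0 < m → 0 < n → ∀ L : Set X, IsCompact L → IsConnected L →
        Metric.diam (g '' L) ≥ 1 / (n : ℝ) →
        ∃ x ∈ L, connectedComponentIn (g ⁻¹' {g x}) x ⊆ Metric.thickening (1 / (m : ℝ)) L) := by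
  constructor
  · -- easy direction
    intro hKr m n hm hn L hL hLc hdiam
    rcases hKr L hL hLc with hsub | ⟨x, hx, hxs⟩
    · exfalso
      have h0 : Metric.diam (g '' L) = 0 := Metric.diam_subsingleton hsub
      have : (0 : ℝ) < 1 / (n : ℝ) := by positivity
      rw [h0] at hdiam
      linarith
    · refine ⟨x, hx, hxs.trans (Metric.self_subset_thickening ?_ L)⟩
      positivity
  · -- hard direction
    intro H K hK hKc
    by_cases hns : (g '' K).Subsingleton
    · exact Or.inl hns
    right
    by_contra hno
    push_neg at hno
    haveI hκc : CompactSpace K := isCompact_iff_compactSpace.mp hK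
    haveI hκconn : ConnectedSpace K := Subtype.connectedSpace hKc
    set f : K → M := fun a => g a.1 with hfdef
    have hfc : Continuous f := hg.comp continuous_subtype_val
    have hrefl : ∀ a : K, a ∈ connectedComponentIn (f ⁻¹' {f a}) a :=
      fun a => mem_connectedComponentIn rfl
    have hfiber_eq : ∀ {a b : K}, b ∈ connectedComponentIn (f ⁻¹' {f a}) a → f b = f a :=
      fun {a b} h => connectedComponentIn_subset (f ⁻¹' {f a}) a h
    have hsymm : ∀ {a b : K}, b ∈ connectedComponentIn (f ⁻¹' {f a}) a →
        a ∈ connectedComponentIn (f ⁻¹' {f b}) b := by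
      intro a b h
      have hfb : f b = f a := hfiber_eq h
      have heq : connectedComponentIn (f ⁻¹' {f a}) a = connectedComponentIn (f ⁻¹' {f a}) b :=
        connectedComponentIn_eq h
      rw [hfb, ← heq]
      exact hrefl a
    have htrans : ∀ {a b c : K}, b ∈ connectedComponentIn (f ⁻¹' {f a}) a →
        c ∈ connectedComponentIn (f ⁻¹' {f b}) b →
        c ∈ connectedComponentIn (f ⁻¹' {f a}) a := by
      intro a b c h1 h2
      have hfb : f b = f a := hfiber_eq h1
      rw [hfb] at h2
      rw [connectedComponentIn_eq h1]
      exact h2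
    letI S : Setoid K := ⟨fun a b => b ∈ connectedComponentIn (f ⁻¹' {f a}) a,
      ⟨hrefl, fun h => hsymm h, fun h1 h2 => htrans h1 h2⟩⟩
    let Y := Quotient S
    let q : K → Y := Quotient.mk'
    have hqc : Continuous q := continuous_quotient_mk'
    have hqsurj : Function.Surjective q := Quotient.mk''_surjective
    have hexact : ∀ {a b : K}, q a = q b → b ∈ connectedComponentIn (f ⁻¹' {f a}) a :=
      fun {a b} h => Quotient.exact' h
    have hsound : ∀ {a b : K}, b ∈ connectedComponentIn (f ⁻¹' {f a}) a → q a = q b :=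
      fun {a b} h => Quotient.sound' h
    have hclass : ∀ a : K, q ⁻¹' {q a} = connectedComponentIn (f ⁻¹' {f a}) a := by
      intro a
      ext b
      simp only [mem_preimage, mem_singleton_iff]
      exact ⟨fun h => hsymm (hexact h), fun h => hsound (hsymm h)⟩
    -- separation of classes by saturated open sets
    have hsep : ∀ a b : K, q a ≠ q b → ∃ O₁ O₂ : Set K,
        IsOpen O₁ ∧ IsOpen O₂ ∧ a ∈ O₁ ∧ b ∈ O₂ ∧ Disjoint O₁ O₂ ∧
        (∀ z ∈ O₁, connectedComponentIn (f ⁻¹' {f z}) z ⊆ O₁) ∧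
        (∀ z ∈ O₂, connectedComponentIn (f ⁻¹' {f z}) z ⊆ O₂) := by
      intro a b hne
      by_cases hfab : f a = f b
      · have hbna : b ∉ connectedComponentIn (f ⁻¹' {f a}) a := fun h => hne (hsound h)
        have hCb_closed : IsClosed (connectedComponentIn (f ⁻¹' {f b}) b) :=
          aux_isClosed_connectedComponentIn (isClosed_singleton.preimage hfc)
        have hCab : connectedComponentIn (f ⁻¹' {f a}) a ⊆
            (connectedComponentIn (f ⁻¹' {f b}) b)ᶜ := by
          intro z hz hzb
          apply hbna
          have h1 : connectedComponentIn (f ⁻¹' {f a}) a = connectedComponentIn (f ⁻¹' {f a}) z :=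
            connectedComponentIn_eq hz
          have h2 : connectedComponentIn (f ⁻¹' {f b}) b = connectedComponentIn (f ⁻¹' {f b}) z :=
            connectedComponentIn_eq hzb
          have h3 : (f ⁻¹' {f a}) = (f ⁻¹' {f b}) := by rw [hfab]
          rw [h1, h3, ← h2]
          exact hrefl b
        obtain ⟨W, V, hWo, hVo, hcW, hWU, hfaV, hpre⟩ :=
          aux_sep hfc a hCb_closed.isOpen_compl hCab
        have hsat : ∀ z, f z ∈ V → z ∈ W →
            connectedComponentIn (f ⁻¹' {f z}) z ⊆ W ∩ f ⁻¹' V := by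
          intro z hzV hzW
          have hfib : connectedComponentIn (f ⁻¹' {f z}) z ⊆ f ⁻¹' V := by
            intro w hw
            have : f w = f z := connectedComponentIn_subset (f ⁻¹' {f z}) z hw
            simpa [this] using hzV
          have hWsub : connectedComponentIn (f ⁻¹' {f z}) z ⊆ W :=
            IsPreconnected.subset_left_of_subset_union hWo isClosed_closure.isOpen_compl
              (disjoint_compl_right.mono_left subset_closure) (hfib.trans hpre)
              ⟨z, hrefl z, hzW⟩ isPreconnected_connectedComponentIn
          exact subset_inter hWsub hfib
        have hsat2 : ∀ z, f z ∈ V → z ∈ (closure W)ᶜ →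
            connectedComponentIn (f ⁻¹' {f z}) z ⊆ (closure W)ᶜ ∩ f ⁻¹' V := by
          intro z hzV hzW
          have hfib : connectedComponentIn (f ⁻¹' {f z}) z ⊆ f ⁻¹' V := by
            intro w hw
            have : f w = f z := connectedComponentIn_subset (f ⁻¹' {f z}) z hw
            simpa [this] using hzV
          have hWsub : connectedComponentIn (f ⁻¹' {f z}) z ⊆ (closure W)ᶜ :=
            IsPreconnected.subset_right_of_subset_union hWo isClosed_closure.isOpen_compl
              (disjoint_compl_right.mono_left subset_closure) (hfib.trans hpre)
              ⟨z, hrefl z, hzW⟩ isPreconnected_connectedComponentIn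
          exact subset_inter hWsub hfib
        refine ⟨W ∩ f ⁻¹' V, (closure W)ᶜ ∩ f ⁻¹' V,
          hWo.inter (hVo.preimage hfc), isClosed_closure.isOpen_compl.inter (hVo.preimage hfc),
          ⟨hcW (hrefl a), hfaV⟩, ?_, ?_, ?_, ?_⟩
        · have hbV : f b ∈ V := by rw [hfab] at hfaV; exact hfaV
          have hbW : b ∉ W := fun hbw => (hWU hbw) (hrefl b)
          have : b ∈ W ∪ (closure W)ᶜ := hpre hbV
          rcases this with h | h
          · exact absurd h hbW
          · exact ⟨h, hbV⟩
        · exact ((disjoint_compl_right.mono_left subset_closure).mono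
            inter_subset_left inter_subset_left)
        · rintro z ⟨hzW, hzV⟩
          exact hsat z hzV hzW
        · rintro z ⟨hzW, hzV⟩
          exact hsat2 z hzV hzW
      · obtain ⟨V₁, V₂, hV₁, hV₂, ha1, hb2, hd⟩ := t2_separation hfab
        refine ⟨f ⁻¹' V₁, f ⁻¹' V₂, hV₁.preimage hfc, hV₂.preimage hfc, ha1, hb2,
          hd.preimage f, ?_, ?_⟩
        · intro z hz w hw
          have : f w = f z := connectedComponentIn_subset (f ⁻¹' {f z}) z hw
          simpa [mem_preimage, this] using hz
        · intro z hz w hw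
          have : f w = f z := connectedComponentIn_subset (f ⁻¹' {f z}) z hw
          simpa [mem_preimage, this] using hz
    have hsatimg : ∀ (O : Set K), (∀ z ∈ O, connectedComponentIn (f ⁻¹' {f z}) z ⊆ O) →
        q ⁻¹' (q '' O) = O := by
      intro O hsat
      ext w
      simp only [mem_preimage, mem_image]
      constructor
      · rintro ⟨z, hz, hqe⟩
        exact hsat z hz (hexact hqe)
      · exact fun hw => ⟨w, hw, rfl⟩
    haveI hT2Y : T2Space Y := by
      refine ⟨fun y₁ y₂ hne => ?_⟩
      obtain ⟨a, rfl⟩ := hqsurj y₁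
      obtain ⟨b, rfl⟩ := hqsurj y₂
      obtain ⟨O₁, O₂, h1, h2, ha, hb, hd, hs1, hs2⟩ := hsep a b hne
      refine ⟨q '' O₁, q '' O₂, ?_, ?_, ⟨a, ha, rfl⟩, ⟨b, hb, rfl⟩, ?_⟩
      · rw [← isQuotientMap_quotient_mk'.isOpen_preimage, hsatimg O₁ hs1]
        exact h1
      · rw [← isQuotientMap_quotient_mk'.isOpen_preimage, hsatimg O₂ hs2]
        exact h2
      · rw [Set.disjoint_left]
        rintro _ ⟨z₁, hz₁, rfl⟩ ⟨z₂, hz₂, hqe⟩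
        have : z₁ ∈ O₂ := by
          rw [← hsatimg O₂ hs2]
          exact mem_preimage.2 (hqe ▸ ⟨z₂, hz₂, rfl⟩)
        exact hd.le_bot ⟨hz₁, this⟩ |>.elim
    haveI : ConnectedSpace Y := by
      have h1 : q '' (univ : Set K) = univ := by
        rw [image_univ, hqsurj.range_eq]
      refine { toPreconnectedSpace := ⟨?_⟩,
               toNonempty := ⟨q (Classical.choice hκconn.toNonempty)⟩ }
      rw [← h1]
      exact isPreconnected_univ.image q hqc.continuousOn
    -- the family of bad closed saturated sets
    set C : X → Set X := fun x => connectedComponentIn (g ⁻¹' {g x}) x with hCdef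
    set Ek : ℕ → Set K := fun k =>
      {a : K | ¬ C a.1 ⊆ Metric.thickening (1 / ((k : ℝ) + 1)) K} with hEkdef
    have hEkcl : ∀ k, IsClosed (Ek k) := by
      intro k
      have heq : Ek k =
          (Subtype.val ⁻¹' {x : X | C x ⊆ Metric.thickening (1 / ((k : ℝ) + 1)) K})ᶜ := rfl
      rw [heq]
      exact (IsOpen.preimage continuous_subtype_val
        (aux_usc hg Metric.isOpen_thickening)).isClosed_compl
    have hCsat : ∀ (z w : K), w ∈ connectedComponentIn (f ⁻¹' {f z}) z → C w.1 = C z.1 := by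
      intro z w hw
      have hfw : f w = f z := hfiber_eq hw
      have himgsub : Subtype.val '' connectedComponentIn (f ⁻¹' {f z}) z ⊆ C z.1 := by
        apply IsPreconnected.subset_connectedComponentIn
        · exact isPreconnected_connectedComponentIn.image _ continuous_subtype_val.continuousOn
        · exact mem_image_of_mem _ (hrefl z)
        · rintro _ ⟨w', hw', rfl⟩
          exact connectedComponentIn_subset (f ⁻¹' {f z}) z hw'
      have hwC : (w : X) ∈ C z.1 := himgsub (mem_image_of_mem _ hw)
      have : connectedComponentIn (g ⁻¹' {g z.1}) z.1 = connectedComponentIn (g ⁻¹' {g z.1}) w.1 :=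
        connectedComponentIn_eq hwC
      have hgw : g w.1 = g z.1 := hfw
      rw [hCdef]
      simp only
      rw [hgw, ← this]
    have hEksat : ∀ k, ∀ z ∈ Ek k, connectedComponentIn (f ⁻¹' {f z}) z ⊆ Ek k := by
      intro k z hz w hw
      have := hCsat z w hw
      simp only [hEkdef, mem_setOf_eq] at hz ⊢
      rw [this]
      exact hz
    have hcoverEk : (⋃ k, Ek k) = univ := by
      apply eq_univ_of_forall
      intro a
      have hnot := hno a.1 a.2
      rw [Set.not_subset] at hnot
      obtain ⟨p, hpC, hpK⟩ := hnot
      have hKcl : IsClosed K := hK.isClosed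
      have hpos : 0 < infDist p K := (hKcl.notMem_iff_infDist_pos hKc.nonempty).1 hpK
      obtain ⟨k, hk⟩ := exists_nat_one_div_lt hpos
      refine mem_iUnion.2 ⟨k, ?_⟩
      simp only [hEkdef, mem_setOf_eq]
      intro hsub
      obtain ⟨z, hzK, hdz⟩ := Metric.mem_thickening_iff.1 (hsub hpC)
      have : infDist p K ≤ dist p z := infDist_le_dist_of_mem hzK
      linarith
    have hclosedY : ∀ k, IsClosed (q '' Ek k) := fun k =>
      (((hEkcl k).isCompact).image hqc).isClosed
    have hunivY : (⋃ k, q '' Ek k) = univ := by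
      rw [← image_iUnion, hcoverEk, image_univ, hqsurj.range_eq]
    obtain ⟨k, y₀, hy₀⟩ := nonempty_interior_of_iUnion_of_closed hclosedY hunivY
    have hsatEk : q ⁻¹' (q '' Ek k) = Ek k := hsatimg (Ek k) (hEksat k)
    -- find a continuum T in Y inside q '' Ek k with nondegenerate image
    let gbar : Y → M := Quotient.lift f (fun a b h => (hfiber_eq h).symm)
    have hgbarc : Continuous gbar := hfc.quotient_lift _
    have hgbar_mk : ∀ a : K, gbar (q a) = f a := fun a => rfl
    have hfibersY : ∀ y : Y, IsPreconnected (q ⁻¹' {y}) := by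
      intro y
      obtain ⟨a, rfl⟩ := hqsurj y
      rw [hclass a]
      exact isPreconnected_connectedComponentIn
    have hlight : ∀ (T : Set Y), IsClosed T → IsPreconnected T →
        (gbar '' T).Subsingleton → T.Subsingleton := by
      intro T hTcl hTpre hss y₁ hy₁ y₂ hy₂
      obtain ⟨a₁, rfl⟩ := hqsurj y₁
      obtain ⟨a₂, rfl⟩ := hqsurj y₂
      have hpreSub : q ⁻¹' T ⊆ f ⁻¹' {f a₁} := by
        intro z hz
        have : gbar (q z) = gbar (q a₁) :=
          hss (mem_image_of_mem _ hz) (mem_image_of_mem _ hy₁)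
        exact this
      have hpre : IsPreconnected (q ⁻¹' T) :=
        aux_preimage_preconnected hqc hqsurj hfibersY hTcl hTpre
      have hpreComp : q ⁻¹' T ⊆ connectedComponentIn (f ⁻¹' {f a₁}) a₁ :=
        hpre.subset_connectedComponentIn (mem_preimage.2 hy₁) hpreSub
      exact (hsound (hpreComp (mem_preimage.2 hy₂))).symm ▸ rfl
    -- produce the continuum T
    obtain ⟨T, hTcl, hTpre, hTsub, hTimg⟩ :
        ∃ T : Set Y, IsClosed T ∧ IsPreconnected T ∧ T ⊆ q '' Ek k ∧
          ¬ (gbar '' T).Subsingleton := by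
      by_cases hBuniv : interior (q '' Ek k) = univ
      · refine ⟨univ, isClosed_univ, isPreconnected_univ, ?_, ?_⟩
        · rw [← hBuniv]; exact interior_subset.trans (le_refl _)
        · intro hss
          apply hns
          have himgK : gbar '' univ = g '' K := by
            rw [← hqsurj.range_eq, ← image_univ, image_image]
            have : ∀ a : K, gbar (q a) = g a.1 := fun a => rfl
            simp only [this]
            ext c
            constructor
            · rintro ⟨a, -, rfl⟩
              exact ⟨a.1, a.2, rfl⟩
            · rintro ⟨x, hx, rfl⟩
              exact ⟨⟨x, hx⟩, mem_univ _, rfl⟩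
          rwa [himgK] at hss
      · obtain ⟨p, hpT, hpB⟩ := aux_bump isOpen_interior hy₀ hBuniv
        refine ⟨connectedComponentIn (closure (interior (q '' Ek k))) y₀,
          aux_isClosed_connectedComponentIn isClosed_closure,
          isPreconnected_connectedComponentIn, ?_, ?_⟩
        · refine (connectedComponentIn_subset _ _).trans ?_
          exact closure_minimal interior_subset (hclosedY k)
        · intro hss
          have hTss := hlight _ (aux_isClosed_connectedComponentIn isClosed_closure)
            isPreconnected_connectedComponentIn hss
          have hy₀T : y₀ ∈ connectedComponentIn (closure (interior (q '' Ek k))) y₀ :=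
            mem_connectedComponentIn (subset_closure hy₀)
          exact hpB (hTss hpT hy₀T ▸ hy₀)
    -- pull T back to a continuum in X
    have hpreT : IsPreconnected (q ⁻¹' T) :=
      aux_preimage_preconnected hqc hqsurj hfibersY hTcl hTpre
    set Lx : Set X := Subtype.val '' (q ⁻¹' T) with hLxdef
    have hLxK : Lx ⊆ K := by rintro _ ⟨a, -, rfl⟩; exact a.2
    have hLxcomp : IsCompact Lx :=
      (((hTcl.preimage hqc).isCompact).image continuous_subtype_val)
    have hTne : T.Nonempty := by
      rcases Set.not_subsingleton_iff.mp hTimg with ⟨c, hc, -⟩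
      obtain ⟨y, hy, -⟩ := hc
      exact ⟨y, hy⟩
    have hLxne : Lx.Nonempty := by
      obtain ⟨y, hy⟩ := hTne
      obtain ⟨a, rfl⟩ := hqsurj y
      exact ⟨a.1, ⟨a, hy, rfl⟩⟩
    have hLxconn : IsConnected Lx :=
      ⟨hLxne, hpreT.image _ continuous_subtype_val.continuousOn⟩
    have hLxEk : ∀ x ∈ Lx, ¬ C x ⊆ Metric.thickening (1 / ((k : ℝ) + 1)) K := by
      rintro _ ⟨a, haT, rfl⟩
      have haEk : a ∈ Ek k := by
        rw [← hsatEk]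
        exact mem_preimage.2 (hTsub haT)
      exact haEk
    have himgLx : g '' Lx = gbar '' T := by
      rw [hLxdef, image_image]
      ext c
      constructor
      · rintro ⟨a, ha, rfl⟩
        exact ⟨q a, ha, rfl⟩
      · rintro ⟨y, hy, rfl⟩
        obtain ⟨a, rfl⟩ := hqsurj y
        exact ⟨a, hy, rfl⟩
    have hLximg : ¬ (g '' Lx).Subsingleton := by rwa [himgLx]
    rcases Set.not_subsingleton_iff.mp hLximg with ⟨c, hc, d, hd, hcd⟩
    have hdpos : 0 < dist c d := dist_pos.2 hcd
    obtain ⟨n, hn⟩ := exists_nat_one_div_lt hdpos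
    have hbdd : Bornology.IsBounded (g '' Lx) := (hLxcomp.image hg).isBounded
    have hdiam : 1 / ((n + 1 : ℕ) : ℝ) ≤ Metric.diam (g '' Lx) := by
      have h1 : dist c d ≤ Metric.diam (g '' Lx) := Metric.dist_le_diam_of_mem hbdd hc hd
      have h2 : (1 : ℝ) / ((n : ℝ) + 1) < dist c d := hn
      push_cast
      linarith
    obtain ⟨x, hxLx, hxsub⟩ := H (k + 1) (n + 1) (Nat.succ_pos _) (Nat.succ_pos _)
      Lx hLxcomp hLxconn hdiam
    apply hLxEk x hxLx
    have hcast : (1 : ℝ) / ((k + 1 : ℕ) : ℝ) = 1 / ((k : ℝ) + 1) := by push_cast; ring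
    calc C x ⊆ Metric.thickening (1 / ((k + 1 : ℕ) : ℝ)) Lx := hxsub
      _ ⊆ Metric.thickening (1 / ((k : ℝ) + 1)) K := by
          rw [hcast]
          exact Metric.thickening_subset_of_subset _ hLxK
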